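/- Let d ≥ 1 and let f : ℝ^d → ℝ be a function which is strictly differentiable at every point (with derivative f'(p) ∈ (ℝ^d)* at p). Suppose the level set S = {p ∈ ℝ^d : f(p) = 0} is compact and nonempty, and that f'(p) ≠ 0 for every p ∈ S. If a vector a ∈ ℝ^d satisfies f'(p)(a) = 0 for every p ∈ S (i.e., a is tangent to the hypersurface S at every point), then a = 0. (This is the paper's argument that a constant vector field which is everywhere tangential to a compact boundary hypersurface Σ must vanish: maximize p ↦ ⟨a, p⟩ over the compact set S and use the Lagrange multiplier rule at the maximizer.) -/

import Mathlib

/-!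
Every continuous linear functional `φ` attains its maximum on the compact level set `S` at some
`p`, and the Lagrange multiplier rule at the regular point `p` makes `φ` a multiple of `f' p`.
Hence `φ a = 0` for every `φ`, and `a = 0` by Hahn–Banach.
-/

variable {E : Type*} [NormedAddCommGroup E] [NormedSpace ℝ E] [CompleteSpace E]

theorem IsLocalExtrOn.exists_eq_smul_of_hasStrictFDerivAt {f : E → ℝ} {f' φ : StrongDual ℝ E}
    {x₀ : E} (hextr : IsLocalExtrOn φ {x | f x = f x₀} x₀) (hf : HasStrictFDerivAt f f' x₀)
    (hf' : f' ≠ 0) : ∃ μ : ℝ, φ = μ • f' := by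
  obtain ⟨a, b, hab, hlin⟩ :=
    hextr.exists_multipliers_of_hasStrictFDerivAt_1d hf φ.hasStrictFDerivAt
  have hb : b ≠ 0 := by
    rintro rfl
    have ha : a ≠ 0 := fun ha => hab (by simp [ha])
    exact hf' <| (smul_eq_zero.mp (by simpa using hlin)).resolve_left ha
  refine ⟨-a / b, ContinuousLinearMap.ext fun x => ?_⟩
  have hx : a * f' x + b * φ x = 0 := by simpa using congrArg (· x) hlin
  simp only [smul_apply, smul_eq_mul]
  field_simp
  linarith

theorem exists_mem_eq_smul_of_isCompact_zero_set {f : E → ℝ} {f' : E → StrongDual ℝ E}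
    (hf : ∀ p ∈ f ⁻¹' {0}, HasStrictFDerivAt f (f' p) p) (hS : IsCompact (f ⁻¹' {0}))
    (hSne : (f ⁻¹' {0}).Nonempty) (hreg : ∀ p ∈ f ⁻¹' {0}, f' p ≠ 0) (φ : StrongDual ℝ E) :
    ∃ p ∈ f ⁻¹' {0}, ∃ μ : ℝ, φ = μ • f' p := by
  obtain ⟨p, hp, hmax⟩ := hS.exists_isMaxOn hSne φ.continuous.continuousOn
  have hlevel : f ⁻¹' {0} = {x | f x = f p} := by
    rw [show f p = 0 from hp]; rfl
  refine ⟨p, hp, IsLocalExtrOn.exists_eq_smul_of_hasStrictFDerivAt ?_ (hf p hp) (hreg p hp)⟩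
  rw [← hlevel]
  exact hmax.localize.isExtr

theorem eq_zero_of_forall_fderiv_apply_eq_zero_of_isCompact_zero_set {f : E → ℝ}
    {f' : E → StrongDual ℝ E} (hf : ∀ p ∈ f ⁻¹' {0}, HasStrictFDerivAt f (f' p) p)
    (hS : IsCompact (f ⁻¹' {0})) (hSne : (f ⁻¹' {0}).Nonempty)
    (hreg : ∀ p ∈ f ⁻¹' {0}, f' p ≠ 0) {a : E} (ha : ∀ p ∈ f ⁻¹' {0}, f' p a = 0) : a = 0 := by
  refine SeparatingDual.eq_zero_of_forall_dual_eq_zero (R := ℝ) fun φ => ?_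
  obtain ⟨p, hp, μ, rfl⟩ := exists_mem_eq_smul_of_isCompact_zero_set hf hS hSne hreg φ
  simp [ha p hp]

theorem tangent_constant_vector_eq_zero_general (d : ℕ)
    (f : EuclideanSpace ℝ (Fin d) → ℝ)
    (f' : EuclideanSpace ℝ (Fin d) → (EuclideanSpace ℝ (Fin d) →L[ℝ] ℝ))
    (hf : ∀ p, HasStrictFDerivAt f (f' p) p)
    (hScomp : IsCompact (f ⁻¹' {0}))
    (hSne : (f ⁻¹' {0}).Nonempty)
    (hreg : ∀ p ∈ f ⁻¹' {0}, f' p ≠ 0)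
    (a : EuclideanSpace ℝ (Fin d))
    (ha : ∀ p ∈ f ⁻¹' {0}, f' p a = 0) :
    a = 0 :=
  eq_zero_of_forall_fderiv_apply_eq_zero_of_isCompact_zero_set (fun p _ => hf p) hScomp hSne hreg ha

/-- A constant vector field that is everywhere tangential to a compact regular
level hypersurface `S = f⁻¹{0}` must vanish. -/
theorem tangent_constant_vector_eq_zero (d : ℕ) (hd : 1 ≤ d)
    (f : EuclideanSpace ℝ (Fin d) → ℝ)
    (f' : EuclideanSpace ℝ (Fin d) → (EuclideanSpace ℝ (Fin d) →L[ℝ] ℝ))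
    (hf : ∀ p, HasStrictFDerivAt f (f' p) p)
    (hScomp : IsCompact (f ⁻¹' {0}))
    (hSne : (f ⁻¹' {0}).Nonempty)
    (hreg : ∀ p ∈ f ⁻¹' {0}, f' p ≠ 0)
    (a : EuclideanSpace ℝ (Fin d))
    (ha : ∀ p ∈ f ⁻¹' {0}, f' p a = 0) :
    a = 0 :=
  tangent_constant_vector_eq_zero_general d f f' hf hScomp hSne hreg a ha
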